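/- Let α ∈ (0,1) and let k be a nonzero integer. The integral defining Ψ_{α,k}(x) = ∫₀^∞ G_{α,k}(x,ρ)·Φ_{α,k}(ρ) dρ converges for every x > 0, and as x → 0⁺ one has the asymptotics Ψ_{α,k}(x) = √(2|k|/(π(1+α)³)) · (∫₀^∞ Φ_{α,k}²) · x^{1+α/2} + o(x^{3/2}); that is, Ψ_{α,k}(x) − √(2|k|/(π(1+α)³)) · ‖Φ_{α,k}‖²_{L²(0,∞)} · x^{1+α/2} is little-o of x^{3/2} as x → 0⁺. -/

import Mathlib

open MeasureTheory Filter Topology Asymptotics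

/-- The function `Φ_{α,k}(x) = √(π(1+α)/(2|k|)) · x^{−α/2} · exp(−|k|x^{1+α}/(1+α))`. -/
noncomputable def PhiG (α : ℝ) (k : ℤ) (x : ℝ) : ℝ :=
  Real.sqrt (Real.pi * (1 + α) / (2 * |(k : ℝ)|)) * x ^ (-(α / 2)) *
    Real.exp (-(|(k : ℝ)| * x ^ (1 + α) / (1 + α)))

/-- The function `F_{α,k}(x) = √(2(1+α)/(π|k|)) · x^{−α/2} · sinh(|k|x^{1+α}/(1+α))`. -/
noncomputable def FG (α : ℝ) (k : ℤ) (x : ℝ) : ℝ :=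
  Real.sqrt (2 * (1 + α) / (Real.pi * |(k : ℝ)|)) * x ^ (-(α / 2)) *
    Real.sinh (|(k : ℝ)| * x ^ (1 + α) / (1 + α))

/-- The Green kernel `G_{α,k}(r,ρ)`, equal to `(1+α)⁻¹ Φ_{α,k}(r) F_{α,k}(ρ)` for `ρ < r`
and to `(1+α)⁻¹ F_{α,k}(r) Φ_{α,k}(ρ)` for `r ≤ ρ`. -/
noncomputable def GreenG (α : ℝ) (k : ℤ) (r ρ : ℝ) : ℝ :=
  if ρ < r then (1 + α)⁻¹ * PhiG α k r * FG α k ρ else (1 + α)⁻¹ * FG α k r * PhiG α k ρ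

/-- The function `Ψ_{α,k}(x) = ∫₀^∞ G_{α,k}(x,ρ) Φ_{α,k}(ρ) dρ`. -/
noncomputable def PsiG (α : ℝ) (k : ℤ) (x : ℝ) : ℝ :=
  ∫ ρ in Set.Ioi (0 : ℝ), GreenG α k x ρ * PhiG α k ρ

/-!
Splitting the integral at `ρ = x` gives
`Ψ(x) = (1+α)⁻¹ Φ(x) ∫₀ˣ FΦ + (1+α)⁻¹ F(x) (‖Φ‖² - ∫₀ˣ Φ²)`.
Since `sinh t · e^{-t} = (1 - e^{-2t})/2 ≤ t`, the product `FΦ(ρ)` is at most `ρ`; together with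
`Φ(x) = O(x^{-α/2})`, `F(x) = O(x^{1+α/2})` and `∫₀ˣ Φ² = O(x^{1-α})` this makes everything except
`(1+α)⁻¹ F(x) ‖Φ‖²` of size `O(x^{2-α/2})`. Finally `sinh t = t + O(t²)` gives
`(1+α)⁻¹ F(x) = √(2|k|/(π(1+α)³)) x^{1+α/2} + O(x^{2+3α/2})`, and both error exponents exceed
`3/2` because `0 < α < 1`.
-/

open Real Set

theorem Real.sinh_mul_exp_neg_le (t : ℝ) : sinh t * exp (-t) ≤ t := by
  have h1 : exp t * exp (-t) = 1 := by rw [← exp_add, add_neg_cancel, exp_zero]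
  have h2 : exp (-t) * exp (-t) = exp (-(2 * t)) := by rw [← exp_add]; ring_nf
  have h3 := add_one_le_exp (-(2 * t))
  rw [sinh_eq]
  linarith

theorem Real.abs_sinh_sub_self_le {t : ℝ} (ht : |t| ≤ 1) : |sinh t - t| ≤ t ^ 2 := by
  have h1 := abs_exp_sub_one_sub_id_le ht
  have h2 := abs_exp_sub_one_sub_id_le (x := -t) (by rwa [abs_neg])
  rw [neg_sq] at h2
  rw [sinh_eq, abs_le] at *
  constructor <;> linarith [h1.1, h1.2, h2.1, h2.2]

theorem isLittleO_rpow_rpow_nhdsGT_zero {a b : ℝ} (hab : a < b) :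
    (fun x : ℝ => x ^ b) =o[𝓝[>] 0] fun x => x ^ a := by
  have hlim : Tendsto (fun x : ℝ => x ^ (b - a)) (𝓝[>] 0) (𝓝 0) := by
    have := (Real.continuousAt_rpow_const 0 (b - a) (Or.inr (sub_pos.2 hab).le)).tendsto
    rw [zero_rpow (sub_pos.2 hab).ne'] at this
    exact this.mono_left nhdsWithin_le_nhds
  refine (((isLittleO_one_iff ℝ).2 hlim).mul_isBigO (isBigO_refl (fun x : ℝ => x ^ a) _)).congr'
    ?_ (by simp)
  filter_upwards [self_mem_nhdsWithin] with x (hx : 0 < x)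
  rw [← rpow_add hx, sub_add_cancel]

theorem Asymptotics.IsBigO.mul_rpow_nhdsGT_zero {f g : ℝ → ℝ} {a b : ℝ}
    (hf : f =O[𝓝[>] 0] fun x => x ^ a) (hg : g =O[𝓝[>] 0] fun x => x ^ b) :
    (fun x => f x * g x) =O[𝓝[>] 0] fun x => x ^ (a + b) := by
  refine (hf.mul hg).congr' .rfl ?_
  filter_upwards [self_mem_nhdsWithin] with x (hx : 0 < x)
  rw [rpow_add hx]

section

variable {α : ℝ} {k : ℤ} {x : ℝ}

theorem PhiG_nonneg (hx : 0 ≤ x) : 0 ≤ PhiG α k x := by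
  unfold PhiG; positivity

theorem FG_nonneg (hα : -1 < α) (hx : 0 ≤ x) : 0 ≤ FG α k x := by
  have hα' : 0 < 1 + α := by linarith
  unfold FG
  exact mul_nonneg (by positivity) (sinh_nonneg_iff.2 (by positivity))

theorem PhiG_le (hα : -1 < α) (hx : 0 ≤ x) :
    PhiG α k x ≤ √(π * (1 + α) / (2 * |(k : ℝ)|)) * x ^ (-(α / 2)) := by
  have hα' : 0 < 1 + α := by linarith
  have ht : 0 ≤ |(k : ℝ)| * x ^ (1 + α) / (1 + α) := by positivity
  unfold PhiG
  exact mul_le_of_le_one_right (by positivity) (exp_le_one_iff.2 (by linarith))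

theorem PhiG_isBigO (hα : -1 < α) : PhiG α k =O[𝓝[>] 0] fun x => x ^ (-(α / 2)) := by
  refine IsBigO.of_bound (√(π * (1 + α) / (2 * |(k : ℝ)|))) ?_
  filter_upwards [self_mem_nhdsWithin] with x (hx : 0 < x)
  rw [Real.norm_of_nonneg (PhiG_nonneg hx.le), Real.norm_of_nonneg (by positivity)]
  exact PhiG_le hα hx.le

theorem PhiG_sq (hα : -1 < α) (hx : 0 ≤ x) :
    PhiG α k x ^ 2 = π * (1 + α) / (2 * |(k : ℝ)|) *
      (x ^ (-α) * exp (-(2 * |(k : ℝ)| / (1 + α)) * x ^ (1 + α))) := by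
  have hrpow : (x ^ (-(α / 2))) ^ 2 = x ^ (-α) := by
    rw [← rpow_natCast, ← rpow_mul hx]; norm_num
  have hexp : exp (-(|(k : ℝ)| * x ^ (1 + α) / (1 + α))) ^ 2
      = exp (-(2 * |(k : ℝ)| / (1 + α)) * x ^ (1 + α)) := by
    rw [← exp_nat_mul]; congr 1; ring
  have : 0 < 1 + α := by linarith
  unfold PhiG
  rw [mul_pow, mul_pow, sq_sqrt (by positivity), hrpow, hexp, mul_assoc]

theorem PhiG_sq_le (hα : -1 < α) (hx : 0 ≤ x) :
    PhiG α k x ^ 2 ≤ π * (1 + α) / (2 * |(k : ℝ)|) * x ^ (-α) := by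
  have hα' : 0 < 1 + α := by linarith
  rw [PhiG_sq hα hx]
  gcongr
  refine mul_le_of_le_one_right (by positivity) (exp_le_one_iff.2 ?_)
  rw [neg_mul, neg_nonpos]
  positivity

theorem integrableOn_PhiG_sq (hα : -1 < α) (hα1 : α < 1) (hk : k ≠ 0) :
    IntegrableOn (fun ρ => PhiG α k ρ ^ 2) (Ioi 0) := by
  have hα' : 0 < 1 + α := by linarith
  have : 0 < |(k : ℝ)| := by positivity
  refine IntegrableOn.congr_fun ((integrableOn_rpow_mul_exp_neg_mul_rpow (by linarith) hα'
    (by positivity : 0 < 2 * |(k : ℝ)| / (1 + α))).const_mul _)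
    (fun ρ hρ => (PhiG_sq hα (le_of_lt hρ)).symm) measurableSet_Ioi

theorem sqrt_mul_sqrt_PhiG_FG_coeff (hα : -1 < α) (hk : k ≠ 0) :
    √(π * (1 + α) / (2 * |(k : ℝ)|)) * √(2 * (1 + α) / (π * |(k : ℝ)|)) = (1 + α) / |(k : ℝ)| := by
  have : 0 < 1 + α := by linarith
  have : 0 < |(k : ℝ)| := by positivity
  rw [← sqrt_mul (by positivity), ← sqrt_sq (by positivity : 0 ≤ (1 + α) / |(k : ℝ)|)]
  congr 1
  field_simp

theorem FG_mul_PhiG_le (hα : -1 < α) (hk : k ≠ 0) (hx : 0 < x) :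
    FG α k x * PhiG α k x ≤ x := by
  set t := |(k : ℝ)| * x ^ (1 + α) / (1 + α)
  have hα' : 0 < 1 + α := by linarith
  have hk' : 0 < |(k : ℝ)| := by positivity
  calc FG α k x * PhiG α k x
      = (1 + α) / |(k : ℝ)| * (x ^ (-(α / 2)) * x ^ (-(α / 2))) * (sinh t * exp (-t)) := by
        rw [← sqrt_mul_sqrt_PhiG_FG_coeff hα hk]; unfold FG PhiG; ring
    _ ≤ (1 + α) / |(k : ℝ)| * (x ^ (-(α / 2)) * x ^ (-(α / 2))) * t := by
        gcongr; exact sinh_mul_exp_neg_le t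
    _ = x ^ (-(α / 2) + -(α / 2) + (1 + α)) := by
        rw [rpow_add hx, rpow_add hx]
        simp only [t]
        field_simp
    _ = x := by rw [show -(α / 2) + -(α / 2) + (1 + α) = 1 by ring, rpow_one]

theorem abs_FG_sub_le (hα : -1 < α) (hx : 0 < x) (ht : |(k : ℝ)| * x ^ (1 + α) / (1 + α) ≤ 1) :
    |FG α k x - √(2 * (1 + α) / (π * |(k : ℝ)|)) * (|(k : ℝ)| / (1 + α)) * x ^ (1 + α / 2)|
      ≤ √(2 * (1 + α) / (π * |(k : ℝ)|)) * (|(k : ℝ)| / (1 + α)) ^ 2 * x ^ (2 + 3 * α / 2) := by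
  set t := |(k : ℝ)| * x ^ (1 + α) / (1 + α)
  have : 0 < 1 + α := by linarith
  have ht0 : 0 ≤ t := by positivity
  calc |FG α k x - √(2 * (1 + α) / (π * |(k : ℝ)|)) * (|(k : ℝ)| / (1 + α)) * x ^ (1 + α / 2)|
      = √(2 * (1 + α) / (π * |(k : ℝ)|)) * x ^ (-(α / 2)) * |sinh t - t| := by
        rw [show 1 + α / 2 = -(α / 2) + (1 + α) by ring, rpow_add hx, ← abs_of_nonneg
          (by positivity : 0 ≤ √(2 * (1 + α) / (π * |(k : ℝ)|)) * x ^ (-(α / 2))), ← abs_mul]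
        congr 1
        simp only [FG, t]
        ring
    _ ≤ √(2 * (1 + α) / (π * |(k : ℝ)|)) * x ^ (-(α / 2)) * t ^ 2 := by
        gcongr
        exact abs_sinh_sub_self_le (abs_le.2 ⟨by linarith, ht⟩)
    _ = √(2 * (1 + α) / (π * |(k : ℝ)|)) * (|(k : ℝ)| / (1 + α)) ^ 2 * x ^ (2 + 3 * α / 2) := by
        rw [show 2 + 3 * α / 2 = -(α / 2) + (1 + α) + (1 + α) by ring, rpow_add hx, rpow_add hx]
        ring

theorem FG_sub_isBigO (hα : -1 < α) :
    (fun x => FG α k x - √(2 * (1 + α) / (π * |(k : ℝ)|)) * (|(k : ℝ)| / (1 + α)) * x ^ (1 + α / 2))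
      =O[𝓝[>] 0] fun x => x ^ (2 + 3 * α / 2) := by
  have hlim : Tendsto (fun x : ℝ => |(k : ℝ)| * x ^ (1 + α) / (1 + α)) (𝓝[>] 0) (𝓝 0) := by
    have := ((continuousAt_rpow_const 0 (1 + α) (Or.inr (by linarith))).const_mul
      |(k : ℝ)|).div_const (1 + α)
    rw [ContinuousAt, zero_rpow (by linarith), mul_zero, zero_div] at this
    exact this.mono_left nhdsWithin_le_nhds
  refine IsBigO.of_bound (√(2 * (1 + α) / (π * |(k : ℝ)|)) * (|(k : ℝ)| / (1 + α)) ^ 2) ?_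
  filter_upwards [hlim.eventually_le_const zero_lt_one, self_mem_nhdsWithin]
    with x ht (hx : 0 < x)
  rw [Real.norm_eq_abs, Real.norm_of_nonneg (by positivity)]
  exact abs_FG_sub_le hα hx ht

theorem FG_isBigO (hα : -1 < α) : FG α k =O[𝓝[>] 0] fun x => x ^ (1 + α / 2) := by
  have hlin : (fun x : ℝ => √(2 * (1 + α) / (π * |(k : ℝ)|)) * (|(k : ℝ)| / (1 + α))
      * x ^ (1 + α / 2)) =O[𝓝[>] 0] fun x => x ^ (1 + α / 2) :=
    isBigO_refl _ _ |>.const_mul_left _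
  have hrem := (FG_sub_isBigO (k := k) hα).trans
    (isLittleO_rpow_rpow_nhdsGT_zero (by linarith : 1 + α / 2 < 2 + 3 * α / 2)).isBigO
  simpa using hrem.add hlin

theorem norm_FG_mul_PhiG_le (hα : -1 < α) (hk : k ≠ 0) {ρ : ℝ} (hρ : ρ ∈ Ioo 0 x) :
    ‖FG α k ρ * PhiG α k ρ‖ ≤ x := by
  rw [Real.norm_of_nonneg (mul_nonneg (FG_nonneg hα hρ.1.le) (PhiG_nonneg hρ.1.le))]
  exact (FG_mul_PhiG_le hα hk hρ.1).trans hρ.2.le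

theorem integrableOn_FG_mul_PhiG (hα : -1 < α) (hk : k ≠ 0) :
    IntegrableOn (fun ρ => FG α k ρ * PhiG α k ρ) (Ioo 0 x) := by
  refine Measure.integrableOn_of_bounded (M := x) measure_Ioo_lt_top.ne
    (by unfold FG PhiG; fun_prop) ?_
  filter_upwards [ae_restrict_mem measurableSet_Ioo] with ρ hρ
  exact norm_FG_mul_PhiG_le hα hk hρ

theorem integral_FG_mul_PhiG_isBigO (hα : -1 < α) (hk : k ≠ 0) :
    (fun x => ∫ ρ in Ioo 0 x, FG α k ρ * PhiG α k ρ) =O[𝓝[>] 0] fun x => x ^ (2 : ℝ) := by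
  refine IsBigO.of_bound 1 ?_
  filter_upwards [self_mem_nhdsWithin] with x (hx : 0 < x)
  have hbound := norm_setIntegral_le_of_norm_le_const (μ := volume)
    (measure_Ioo_lt_top (a := 0) (b := x)) fun _ => norm_FG_mul_PhiG_le (k := k) hα hk
  rw [Real.volume_real_Ioo_of_le hx.le, sub_zero] at hbound
  rwa [one_mul, Real.norm_of_nonneg (by positivity : (0 : ℝ) ≤ x ^ (2 : ℝ)), rpow_two, sq]

theorem integral_PhiG_sq_isBigO (hα : -1 < α) (hα1 : α < 1) :
    (fun x => ∫ ρ in Ioo 0 x, PhiG α k ρ ^ 2) =O[𝓝[>] 0] fun x => x ^ (1 - α) := by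
  have hα' : 0 < 1 + α := by linarith
  refine IsBigO.of_bound (π * (1 + α) / (2 * |(k : ℝ)|) / (1 - α)) ?_
  filter_upwards [self_mem_nhdsWithin] with x (hx : 0 < x)
  have hint : ∫ ρ in Ioo 0 x, π * (1 + α) / (2 * |(k : ℝ)|) * ρ ^ (-α)
      = π * (1 + α) / (2 * |(k : ℝ)|) / (1 - α) * x ^ (1 - α) := by
    rw [integral_const_mul, ← integral_Ioc_eq_integral_Ioo, ← intervalIntegral.integral_of_le hx.le,
      integral_rpow (Or.inl (by linarith)), zero_rpow (by linarith), neg_add_eq_sub]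
    ring
  rw [Real.norm_of_nonneg (rpow_nonneg hx.le _), ← hint]
  refine norm_integral_le_of_norm_le ?_ ?_
  · exact ((intervalIntegral.integrableOn_Ioo_rpow_iff hx).2 (by linarith)).const_mul _
  · filter_upwards [ae_restrict_mem measurableSet_Ioo] with ρ hρ
    rw [Real.norm_of_nonneg (sq_nonneg _)]
    exact PhiG_sq_le hα hρ.1.le

theorem GreenG_of_lt {r ρ : ℝ} (h : ρ < r) :
    GreenG α k r ρ = (1 + α)⁻¹ * PhiG α k r * FG α k ρ := if_pos h

theorem GreenG_of_le {r ρ : ℝ} (h : r ≤ ρ) :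
    GreenG α k r ρ = (1 + α)⁻¹ * FG α k r * PhiG α k ρ := if_neg h.not_gt

theorem setIntegral_Ioo_GreenG_mul_PhiG :
    ∫ ρ in Ioo 0 x, GreenG α k x ρ * PhiG α k ρ
      = (1 + α)⁻¹ * PhiG α k x * ∫ ρ in Ioo 0 x, FG α k ρ * PhiG α k ρ := by
  rw [← integral_const_mul]
  refine setIntegral_congr_fun measurableSet_Ioo fun ρ hρ => ?_
  rw [GreenG_of_lt hρ.2]
  ring

theorem setIntegral_Ici_GreenG_mul_PhiG :
    ∫ ρ in Ici x, GreenG α k x ρ * PhiG α k ρ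
      = (1 + α)⁻¹ * FG α k x * ∫ ρ in Ici x, PhiG α k ρ ^ 2 := by
  rw [← integral_const_mul]
  refine setIntegral_congr_fun measurableSet_Ici fun ρ hρ => ?_
  rw [GreenG_of_le hρ]
  ring

theorem integrableOn_GreenG_mul_PhiG (hα : -1 < α) (hα1 : α < 1) (hk : k ≠ 0) (hx : 0 < x) :
    IntegrableOn (fun ρ => GreenG α k x ρ * PhiG α k ρ) (Ioi 0) := by
  rw [← Ioo_union_Ici_eq_Ioi hx]
  refine IntegrableOn.union ?_ ?_
  · refine IntegrableOn.congr_fun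
      ((integrableOn_FG_mul_PhiG hα hk).const_mul ((1 + α)⁻¹ * PhiG α k x))
      (fun ρ hρ => ?_) measurableSet_Ioo
    rw [GreenG_of_lt hρ.2]
    ring
  · refine IntegrableOn.congr_fun (((integrableOn_PhiG_sq hα hα1 hk).mono_set
      (Ici_subset_Ioi.2 hx)).const_mul ((1 + α)⁻¹ * FG α k x)) (fun ρ hρ => ?_) measurableSet_Ici
    rw [GreenG_of_le hρ]
    ring

theorem setIntegral_Ioi_eq_Ioo_add_Ici {f : ℝ → ℝ} (hf : IntegrableOn f (Ioi 0)) (hx : 0 < x) :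
    ∫ ρ in Ioi 0, f ρ = (∫ ρ in Ioo 0 x, f ρ) + ∫ ρ in Ici x, f ρ := by
  rw [← Ioo_union_Ici_eq_Ioi hx] at hf ⊢
  exact setIntegral_union (disjoint_left.2 fun _ h h' => h'.not_gt h.2) measurableSet_Ici
    (hf.mono_set subset_union_left) (hf.mono_set subset_union_right)

theorem PsiG_eq (hα : -1 < α) (hα1 : α < 1) (hk : k ≠ 0) (hx : 0 < x) :
    PsiG α k x = (1 + α)⁻¹ * PhiG α k x * (∫ ρ in Ioo 0 x, FG α k ρ * PhiG α k ρ)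
      + (1 + α)⁻¹ * FG α k x *
        ((∫ ρ in Ioi 0, PhiG α k ρ ^ 2) - ∫ ρ in Ioo 0 x, PhiG α k ρ ^ 2) := by
  rw [PsiG, setIntegral_Ioi_eq_Ioo_add_Ici (integrableOn_GreenG_mul_PhiG hα hα1 hk hx) hx,
    setIntegral_Ioi_eq_Ioo_add_Ici (integrableOn_PhiG_sq hα hα1 hk) hx,
    setIntegral_Ioo_GreenG_mul_PhiG, setIntegral_Ici_GreenG_mul_PhiG, add_sub_cancel_left]

theorem sqrt_leading_coeff_eq (hα : -1 < α) (hk : k ≠ 0) :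
    √(2 * |(k : ℝ)| / (π * (1 + α) ^ 3))
      = (1 + α)⁻¹ * (√(2 * (1 + α) / (π * |(k : ℝ)|)) * (|(k : ℝ)| / (1 + α))) := by
  have : 0 < 1 + α := by linarith
  have : 0 < |(k : ℝ)| := by positivity
  rw [← sqrt_sq (by positivity : 0 ≤ (1 + α)⁻¹ * (√(2 * (1 + α) / (π * |(k : ℝ)|)) *
    (|(k : ℝ)| / (1 + α))))]
  congr 1
  rw [mul_pow, mul_pow, sq_sqrt (by positivity)]
  field_simp

end

/-- For `α ∈ (0,1)` and nonzero `k`, the integral defining `Ψ_{α,k}`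
converges for every `x > 0` and, as `x → 0⁺`,
`Ψ_{α,k}(x) = √(2|k|/(π(1+α)³)) ‖Φ_{α,k}‖²_{L²} x^{1+α/2} + o(x^{3/2})`. -/
theorem PsiG_short_distance_asymptotics (α : ℝ) (hα0 : 0 < α) (hα1 : α < 1)
    (k : ℤ) (hk : k ≠ 0) :
    (∀ x : ℝ, 0 < x →
      IntegrableOn (fun ρ : ℝ => GreenG α k x ρ * PhiG α k ρ) (Set.Ioi 0)) ∧
    (fun x : ℝ =>
        PsiG α k x -
          Real.sqrt (2 * |(k : ℝ)| / (Real.pi * (1 + α) ^ 3)) *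
            (∫ ρ in Set.Ioi (0 : ℝ), PhiG α k ρ ^ 2) * x ^ (1 + α / 2))
      =o[𝓝[>] 0] fun x : ℝ => x ^ ((3 : ℝ) / 2) := by
  have hα' : -1 < α := by linarith
  refine ⟨fun x hx => integrableOn_GreenG_mul_PhiG hα' hα1 hk hx, ?_⟩
  have h32 {b : ℝ} (hb : 3 / 2 < b) : (fun x : ℝ => x ^ b) =o[𝓝[>] 0] fun x => x ^ ((3 : ℝ) / 2) :=
    isLittleO_rpow_rpow_nhdsGT_zero hb
  have hnear := ((PhiG_isBigO (k := k) hα').mul_rpow_nhdsGT_zero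
    (integral_FG_mul_PhiG_isBigO hα' hk)).trans_isLittleO (h32 (by linarith))
  have hfar := ((FG_isBigO (k := k) hα').mul_rpow_nhdsGT_zero
    (integral_PhiG_sq_isBigO (k := k) hα' hα1)).trans_isLittleO (h32 (by linarith))
  have hlin := (FG_sub_isBigO (k := k) hα').trans_isLittleO (h32 (by linarith))
  refine (((hnear.const_mul_left (1 + α)⁻¹).sub (hfar.const_mul_left (1 + α)⁻¹)).add
    (hlin.const_mul_left ((1 + α)⁻¹ * ∫ ρ in Ioi 0, PhiG α k ρ ^ 2))).congr' ?_ .rfl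
  filter_upwards [self_mem_nhdsWithin] with x (hx : 0 < x)
  rw [PsiG_eq hα' hα1 hk hx, sqrt_leading_coeff_eq hα' hk]
  ring
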